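/- arXiv:2110.15440 — 2 statements merged into one kernel-verified Lean document; each statement's English description precedes it below -/
import Mathlib

section
/- Single-feature unbiasedness: let μ be a probability measure on ℝ^d and K : ℝ^d → ℝ a function such that K(z) = ∫ cos(w·z) dμ(w) for every z ∈ ℝ^d. Let (w, b) be distributed according to the product of μ and the uniform distribution on [0, 2π]. Then for all x, y ∈ ℝ^d, E[2·cos(w·x + b)·cos(w·y + b)] = K(x − y). -/
open Real RealInnerProductSpace MeasureTheory ProbabilityTheory

/-! By the product-to-sum formula, `2 cos (A + b) cos (C + b) = cos (A - C) + cos (A + C + 2b)`,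
and the second term integrates to zero over the full period `b ∈ [0, 2π]`. Integrating first in
`b` (Fubini applies since the integrand is bounded by `2` and both measures are finite) leaves
`∫ cos ⟪w, x - y⟫ dμ(w) = K (x - y)`. -/

lemma integral_cos_add_int_mul_zero_two_pi (a : ℝ) {n : ℤ} (hn : n ≠ 0) :
    ∫ b in (0 : ℝ)..2 * π, cos (a + n * b) = 0 := by
  rw [intervalIntegral.integral_comp_add_mul cos (Int.cast_ne_zero.mpr hn), integral_cos,
    mul_zero, add_zero, sin_add_int_mul_two_pi, sub_self, smul_zero]

lemma integral_two_mul_cos_add_mul_cos_add_zero_two_pi (A C : ℝ) :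
    ∫ b in (0 : ℝ)..2 * π, 2 * cos (A + b) * cos (C + b) = 2 * π * cos (A - C) := by
  have product_to_sum : ∀ b, 2 * cos (A + b) * cos (C + b)
      = cos (A - C) + cos ((A + C) + ((2 : ℤ) : ℝ) * b) := fun b => by
    rw [two_mul_cos_mul_cos]; push_cast; ring_nf
  simp only [product_to_sum]
  rw [intervalIntegral.integral_add intervalIntegrable_const
    ((by fun_prop : Continuous _).intervalIntegrable _ _),
    integral_cos_add_int_mul_zero_two_pi _ two_ne_zero, intervalIntegral.integral_const]
  simp

lemma norm_two_mul_cos_mul_cos_le (s t : ℝ) : ‖2 * cos s * cos t‖ ≤ 2 := by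
  rw [norm_mul, norm_mul, Real.norm_ofNat, mul_assoc]
  exact mul_le_of_le_one_right zero_le_two
    (mul_le_one₀ (abs_cos_le_one s) (norm_nonneg _) (abs_cos_le_one t))

lemma uniform_Icc_eq_cond (a b : ℝ) :
    (ENNReal.ofReal (b - a))⁻¹ • volume.restrict (Set.Icc a b) = volume[|Set.Icc a b] := by
  rw [ProbabilityTheory.cond, Real.volume_Icc]

lemma isProbabilityMeasure_uniform_Icc {a b : ℝ} (hab : a < b) :
    IsProbabilityMeasure ((ENNReal.ofReal (b - a))⁻¹ • volume.restrict (Set.Icc a b)) := by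
  rw [uniform_Icc_eq_cond]
  exact cond_isProbabilityMeasure_of_finite (by simpa using hab) (by simp)

lemma integral_uniform_Icc_zero_two_pi_two_mul_cos_add_mul_cos_add (A C : ℝ) :
    ∫ b, 2 * cos (A + b) * cos (C + b)
      ∂((ENNReal.ofReal (2 * π))⁻¹ • volume.restrict (Set.Icc 0 (2 * π))) =
      cos (A - C) := by
  rw [integral_smul_measure, integral_Icc_eq_integral_Ioc,
    ← intervalIntegral.integral_of_le two_pi_pos.le,
    integral_two_mul_cos_add_mul_cos_add_zero_two_pi, ENNReal.toReal_inv,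
    ENNReal.toReal_ofReal two_pi_pos.le, smul_eq_mul, inv_mul_cancel_left₀ two_pi_pos.ne']

/-- Single-feature unbiasedness: if `K z = ∫ cos ⟪w, z⟫ dμ(w)` for a probability
measure `μ` on `ℝ^d`, and `(w, b)` is distributed according to the product of `μ`
and the uniform distribution on `[0, 2π]`, then for all `x, y`,
`E[2 cos(⟪w,x⟫+b) cos(⟪w,y⟫+b)] = K (x - y)`. -/
theorem rff_single_feature_unbiased (d : ℕ)
    (μ : Measure (EuclideanSpace ℝ (Fin d))) [IsProbabilityMeasure μ]
    (K : EuclideanSpace ℝ (Fin d) → ℝ)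
    (hK : ∀ z, K z = ∫ w, Real.cos ⟪w, z⟫ ∂μ)
    (x y : EuclideanSpace ℝ (Fin d)) :
    ∫ p, 2 * Real.cos (⟪p.1, x⟫ + p.2) * Real.cos (⟪p.1, y⟫ + p.2)
        ∂(μ.prod ((ENNReal.ofReal (2 * Real.pi))⁻¹ •
            volume.restrict (Set.Icc 0 (2 * Real.pi)))) =
      K (x - y) := by
  have : IsProbabilityMeasure
      ((ENNReal.ofReal (2 * π))⁻¹ • volume.restrict (Set.Icc 0 (2 * π))) := by
    simpa using isProbabilityMeasure_uniform_Icc two_pi_pos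
  have hint : Integrable (fun p : EuclideanSpace ℝ (Fin d) × ℝ =>
      2 * cos (⟪p.1, x⟫ + p.2) * cos (⟪p.1, y⟫ + p.2))
      (μ.prod ((ENNReal.ofReal (2 * π))⁻¹ • volume.restrict (Set.Icc 0 (2 * π)))) := by
    exact Integrable.of_bound (by fun_prop) 2 (ae_of_all _ fun _ => norm_two_mul_cos_mul_cos_le _ _)
  simp only [integral_prod _ hint, integral_uniform_Icc_zero_two_pi_two_mul_cos_add_mul_cos_add,
    ← inner_sub_right, hK]
end

section
/- Unbiasedness of the random Fourier feature estimator (first claim of Lemma 1): let μ be a probability measure on ℝ^d and K : ℝ^d → ℝ with K(z) = ∫ cos(w·z) dμ(w) for all z. Let D ≥ 1, and let (w₁, b₁), …, (w_D, b_D) be i.i.d. with each (w_j, b_j) distributed according to the product of μ and the uniform distribution on [0, 2π]. Define φ(x) = √(2/D)·(cos(w₁·x + b₁), …, cos(w_D·x + b_D)) ∈ ℝ^D. Then for all x, y ∈ ℝ^d, E[φ(x)·φ(y)] = K(x − y), where φ(x)·φ(y) is the Euclidean inner product in ℝ^D. -/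
open Real RealInnerProductSpace MeasureTheory

/-!
Each summand of `φ(x)·φ(y)` is `(2/D) cos(w·x + b) cos(w·y + b)
= (1/D) (cos(w·(x - y)) + cos(w·(x + y) + 2b))`. The second term averages to zero over a
uniform phase `b`, because `b ↦ 2b` winds `[0, 2π]` twice around the circle, and the first
averages to `K(x - y)/D` over `w ~ μ`. The `D` summands are identically distributed.
-/

noncomputable def uniformPhase : Measure ℝ :=
  (ENNReal.ofReal (2 * π))⁻¹ • volume.restrict (Set.Icc 0 (2 * π))

instance : IsProbabilityMeasure uniformPhase := by
  constructor
  rw [uniformPhase, Measure.smul_apply, Measure.restrict_apply_univ, Real.volume_Icc, sub_zero,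
    smul_eq_mul, ENNReal.inv_mul_cancel (by positivity) ENNReal.ofReal_ne_top]

lemma integrable_cos_comp {α : Type*} [MeasurableSpace α] {μ : Measure α} [IsFiniteMeasure μ]
    {f : α → ℝ} (hf : Measurable f) : Integrable (fun a => cos (f a)) μ :=
  .of_bound (by fun_prop : Measurable _).aestronglyMeasurable 1
    (.of_forall fun a => by simpa using abs_cos_le_one (f a))

lemma integrable_cos_comp_mul_cos_comp {α : Type*} [MeasurableSpace α] {μ : Measure α}
    [IsFiniteMeasure μ] {f g : α → ℝ} (hf : Measurable f) (hg : Measurable g) :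
    Integrable (fun a => cos (f a) * cos (g a)) μ :=
  (integrable_cos_comp hg).bdd_mul (by fun_prop : Measurable _).aestronglyMeasurable
    (.of_forall fun a => by simpa using abs_cos_le_one (f a))

lemma integral_cos_add_two_mul_uniformPhase (θ : ℝ) :
    ∫ b, cos (θ + 2 * b) ∂uniformPhase = 0 := by
  have hperiod : ∫ b in (0)..(2 * π), cos (θ + 2 * b) = 0 := by
    rw [intervalIntegral.integral_comp_add_mul cos two_ne_zero, integral_cos, mul_zero, add_zero,
      show θ + 2 * (2 * π) = θ + (2 : ℤ) * (2 * π) by push_cast; ring, sin_add_int_mul_two_pi,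
      sub_self, smul_zero]
  rw [uniformPhase, integral_smul_measure, integral_Icc_eq_integral_Ioc,
    ← intervalIntegral.integral_of_le two_pi_pos.le, hperiod, smul_zero]

lemma integral_cos_add_mul_cos_add_uniformPhase (s t : ℝ) :
    ∫ b, cos (s + b) * cos (t + b) ∂uniformPhase = cos (s - t) / 2 := by
  have hprod (b : ℝ) :
      cos (s + b) * cos (t + b) = cos (s - t) / 2 + cos (s + t + 2 * b) / 2 := by
    rw [show s - t = (s + b) - (t + b) by ring, show s + t + 2 * b = (s + b) + (t + b) by ring,
      cos_sub (s + b), cos_add (s + b)]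
    ring
  simp_rw [hprod]
  rw [integral_add (integrable_const _) ((integrable_cos_comp (by fun_prop)).div_const _),
    integral_const, integral_div, integral_cos_add_two_mul_uniformPhase]
  simp

lemma integral_prod_uniformPhase_cos_add_mul_cos_add {Ω : Type*} [MeasurableSpace Ω]
    (μ : Measure Ω) [IsFiniteMeasure μ] {f g : Ω → ℝ} (hf : Measurable f) (hg : Measurable g) :
    ∫ p, cos (f p.1 + p.2) * cos (g p.1 + p.2) ∂μ.prod uniformPhase =
      (∫ w, cos (f w - g w) ∂μ) / 2 := by
  rw [integral_prod _ <| integrable_cos_comp_mul_cos_comp (by fun_prop) (by fun_prop)]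
  simp only [integral_cos_add_mul_cos_add_uniformPhase]
  exact integral_div _ _

lemma integral_sum_comp_eval_pi {ι α : Type*} [Fintype ι] [MeasurableSpace α] (P : Measure α)
    [IsProbabilityMeasure P] {g : α → ℝ} (hg : Integrable g P) :
    ∫ ω, ∑ j : ι, g (ω j) ∂Measure.pi (fun _ => P) = Fintype.card ι * ∫ a, g a ∂P := by
  rw [integral_finsetSum _ fun j _ => integrable_comp_eval hg]
  simp [integral_comp_eval (μ := fun _ : ι => P) hg.aestronglyMeasurable]

/-- Unbiasedness of the random Fourier feature estimator (first claim of
Lemma 1): with `K z = ∫ cos ⟪w, z⟫ dμ(w)` for a probability measure `μ` on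
`ℝ^d`, and `(w_j, b_j)`, `j = 1, …, D`, i.i.d. from `μ ⊗ Uniform[0, 2π]`, the
feature map `φ(x) = √(2/D) (cos(⟪w_j, x⟫ + b_j))_j` satisfies
`E[φ(x)·φ(y)] = K (x - y)`. -/
theorem rff_estimator_unbiased (d : ℕ)
    (μ : Measure (EuclideanSpace ℝ (Fin d))) [IsProbabilityMeasure μ]
    (K : EuclideanSpace ℝ (Fin d) → ℝ)
    (hK : ∀ z, K z = ∫ w, Real.cos ⟪w, z⟫ ∂μ)
    (D : ℕ) (hD : 1 ≤ D)
    (x y : EuclideanSpace ℝ (Fin d)) :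
    ∫ ω, (∑ j : Fin D,
        (Real.sqrt (2 / D) * Real.cos (⟪(ω j).1, x⟫ + (ω j).2)) *
        (Real.sqrt (2 / D) * Real.cos (⟪(ω j).1, y⟫ + (ω j).2)))
      ∂(Measure.pi fun _ : Fin D =>
          μ.prod ((ENNReal.ofReal (2 * Real.pi))⁻¹ •
            volume.restrict (Set.Icc 0 (2 * Real.pi)))) =
      K (x - y) := by
  have hx : Measurable fun w : EuclideanSpace ℝ (Fin d) => ⟪w, x⟫ := by fun_prop
  have hy : Measurable fun w : EuclideanSpace ℝ (Fin d) => ⟪w, y⟫ := by fun_prop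
  set feature : EuclideanSpace ℝ (Fin d) × ℝ → ℝ := fun p =>
    cos (⟪p.1, x⟫ + p.2) * cos (⟪p.1, y⟫ + p.2)
  have hfeature : Integrable feature (μ.prod uniformPhase) :=
    integrable_cos_comp_mul_cos_comp (by fun_prop) (by fun_prop)
  calc _ = ∫ ω, ∑ j : Fin D, 2 / D * feature (ω j)
        ∂Measure.pi fun _ : Fin D => μ.prod uniformPhase := by
        congr! 3 with ω j
        rw [mul_mul_mul_comm, mul_self_sqrt (by positivity)]
    _ = D * (2 / D * ((∫ w, cos ⟪w, x - y⟫ ∂μ) / 2)) := by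
        rw [integral_sum_comp_eval_pi _ (hfeature.const_mul _), Fintype.card_fin,
          integral_const_mul, integral_prod_uniformPhase_cos_add_mul_cos_add μ hx hy]
        simp_rw [inner_sub_right]
    _ = K (x - y) := by
        rw [hK]
        field_simp [show (D : ℝ) ≠ 0 from Nat.cast_ne_zero.mpr (by omega)]
end
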